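/- Let J be a nonempty finite index set and let c_j ∈ (0,1) for each j ∈ J with ∑_{j∈J} c_j > 1. Then there exists x* ∈ (0,1) such that the set of fixed points of f_c in the closed interval [0,1] is exactly {x*, 1}; in particular f_c(1) = 1 and 0 is not a fixed point. -/

import Mathlib

/-!
Write `g x = f_c x - x`. Since `∑ c j > 1` and every `c j < 1`, at least two factors of `f_c`
are non-constant, so `f_c` is strictly convex on `[0, ∞)` and so is `g`. Now `g 0 = f_c 0 > 0`,
`g 1 = 0` and `g' 1 = ∑ c j - 1 > 0`, so `g` is negative just left of `1` and the intermediate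
value theorem gives a zero `x*` of `g` in `(0, 1)`. A strictly convex function takes no value
three times, so `x*` and `1` are the only zeros of `g` in `[0, 1]`.
-/

open Set Filter Topology

theorem StrictConvexOn.eq_or_eq_of_apply_eq {𝕜 : Type*} [Field 𝕜] [LinearOrder 𝕜]
    [IsStrictOrderedRing 𝕜] {s : Set 𝕜} {g : 𝕜 → 𝕜} (hg : StrictConvexOn 𝕜 s g)
    {a b x t : 𝕜} (ha : a ∈ s) (hb : b ∈ s) (hx : x ∈ s) (hab : a < b)
    (hga : g a = t) (hgb : g b = t) (hgx : g x = t) : x = a ∨ x = b := by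
  have no_three : ∀ {p q r : 𝕜}, p ∈ s → r ∈ s → p < q → q < r →
      g p = t → g q = t → g r = t → False := by
    intro p q r hp hr hpq hqr hgp hgq hgr
    simpa [hgp, hgq, hgr] using hg.slope_strict_mono_adjacent hp hr hpq hqr
  rcases lt_trichotomy x a with hxa | rfl | hax
  · exact (no_three hx hb hxa hab hgx hga hgb).elim
  · exact .inl rfl
  rcases lt_trichotomy x b with hxb | rfl | hbx
  · exact (no_three ha hb hax hxb hga hgx hgb).elim
  · exact .inr rfl
  · exact (no_three ha hx hab hbx hga hgb hgx).elim

theorem exists_mem_Ioo_lt_of_hasDerivAt_pos {f : ℝ → ℝ} {f' a b : ℝ} (hf : HasDerivAt f f' b)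
    (hf' : 0 < f') (hab : a < b) : ∃ x ∈ Ioo a b, f x < f b := by
  have hslope : ∀ᶠ x in 𝓝[<] b, 0 < slope f b x :=
    ((hasDerivAt_iff_tendsto_slope.1 hf).mono_left (nhdsLT_le_nhdsNE b)).eventually
      (eventually_gt_nhds hf')
  obtain ⟨x, hpos, hx⟩ := (hslope.and (Ioo_mem_nhdsLT hab)).exists
  exact ⟨x, hx, (slope_pos_iff_gt hx.2).1 hpos⟩

theorem Finset.nontrivial_of_one_lt_sum {ι : Type*} {J : Finset ι} {c : ι → ℝ}
    (hc : ∀ j ∈ J, c j ≤ 1) (hsum : 1 < ∑ j ∈ J, c j) : J.Nontrivial := by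
  have hle : ∑ j ∈ J, c j ≤ J.card := by simpa using Finset.sum_le_sum hc
  exact Finset.one_lt_card_iff_nontrivial.1 (by exact_mod_cast hsum.trans_le hle)

/-- The function `f_c` of the reduced likelihood equation. -/
noncomputable def affineProd {ι : Type*} (J : Finset ι) (c : ι → ℝ) (x : ℝ) : ℝ :=
  ∏ j ∈ J, ((1 - c j) + c j * x)

section affineProd

variable {ι : Type*} {J : Finset ι} {c : ι → ℝ}

theorem affineProd_one (J : Finset ι) (c : ι → ℝ) : affineProd J c 1 = 1 := by
  simp [affineProd]

theorem continuous_affineProd : Continuous (affineProd J c) := by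
  unfold affineProd
  fun_prop

theorem one_sub_add_mul_pos {a x : ℝ} (ha : a ∈ Ico 0 1) (hx : 0 ≤ x) : 0 < (1 - a) + a * x := by
  nlinarith [ha.1, ha.2, mul_nonneg ha.1 hx]

theorem affineProd_pos (hc : ∀ j ∈ J, c j ∈ Ico 0 1) {x : ℝ} (hx : 0 ≤ x) :
    0 < affineProd J c x :=
  Finset.prod_pos fun j hj => one_sub_add_mul_pos (hc j hj) hx

theorem affineProd_lt_affineProd (hc : ∀ j ∈ J, c j ∈ Ioo 0 1) (hJ : J.Nonempty) {x y : ℝ}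
    (hx : 0 ≤ x) (hxy : x < y) : affineProd J c x < affineProd J c y :=
  Finset.prod_lt_prod_of_nonempty
    (fun j hj => one_sub_add_mul_pos (Ioo_subset_Ico_self (hc j hj)) hx)
    (fun j hj => by nlinarith [(hc j hj).1]) hJ

theorem hasDerivAt_affineProd [DecidableEq ι] (x : ℝ) :
    HasDerivAt (affineProd J c) (∑ j ∈ J, c j * affineProd (J.erase j) c x) x := by
  have h := HasDerivAt.fun_finsetProd (u := J) (x := x)
    fun j _ => ((hasDerivAt_id x).const_mul (c j)).const_add (1 - c j)
  unfold affineProd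
  simpa [mul_comm] using h

theorem hasDerivAt_affineProd_one : HasDerivAt (affineProd J c) (∑ j ∈ J, c j) 1 := by
  classical
  simpa [affineProd_one] using hasDerivAt_affineProd (J := J) (c := c) 1

theorem strictConvexOn_affineProd (hc : ∀ j ∈ J, c j ∈ Ioo 0 1) (hJ : J.Nontrivial) :
    StrictConvexOn ℝ (Ici 0) (affineProd J c) := by
  classical
  have hderiv : deriv (affineProd J c) = fun x => ∑ j ∈ J, c j * affineProd (J.erase j) c x :=
    funext fun x => (hasDerivAt_affineProd x).deriv
  refine StrictMonoOn.strictConvexOn_of_deriv (convex_Ici 0) continuous_affineProd.continuousOn ?_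
  rw [interior_Ici, hderiv]
  intro x hx y _ hxy
  refine Finset.sum_lt_sum_of_nonempty hJ.nonempty fun j hj => mul_lt_mul_of_pos_left ?_ (hc j hj).1
  exact affineProd_lt_affineProd (fun k hk => hc k (Finset.mem_of_mem_erase hk)) hJ.erase_nonempty
    (le_of_lt hx) hxy

theorem exists_affineProd_eq_self_mem_Ioo (hc : ∀ j ∈ J, c j ∈ Ioo 0 1)
    (hsum : 1 < ∑ j ∈ J, c j) : ∃ x ∈ Ioo 0 1, affineProd J c x = x := by
  obtain ⟨x₀, hx₀, hneg⟩ := exists_mem_Ioo_lt_of_hasDerivAt_pos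
    (hasDerivAt_affineProd_one.sub (hasDerivAt_id 1)) (sub_pos.2 hsum) zero_lt_one
  have hpos : 0 < affineProd J c 0 - 0 := by
    simpa using affineProd_pos (fun j hj => Ioo_subset_Ico_self (hc j hj)) le_rfl
  obtain ⟨x, hx, hfix⟩ := intermediate_value_Ioo' hx₀.1.le
    (continuous_affineProd.sub continuous_id).continuousOn
    ⟨by simpa [affineProd_one] using hneg, hpos⟩
  exact ⟨x, ⟨hx.1, hx.2.trans hx₀.2⟩, sub_eq_zero.1 hfix⟩

end affineProd

theorem fixed_points_in_Icc_eq_pair_general {ι : Type*} (J : Finset ι)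
    (c : ι → ℝ) (hc : ∀ j ∈ J, c j ∈ Set.Ioo (0 : ℝ) 1)
    (hsum : 1 < ∑ j ∈ J, c j) :
    ∃ xstar ∈ Set.Ioo (0 : ℝ) 1,
      {x ∈ Set.Icc (0 : ℝ) 1 | (∏ j ∈ J, ((1 - c j) + c j * x)) = x} = {xstar, 1} ∧
      (∏ j ∈ J, ((1 - c j) + c j * (1 : ℝ))) = 1 ∧
      (∏ j ∈ J, ((1 - c j) + c j * (0 : ℝ))) ≠ 0 := by
  obtain ⟨xstar, hxstar, hfix⟩ := exists_affineProd_eq_self_mem_Ioo hc hsum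
  have hJ : J.Nontrivial := Finset.nontrivial_of_one_lt_sum (fun j hj => (hc j hj).2.le) hsum
  have hconv : StrictConvexOn ℝ (Icc 0 1) fun x => affineProd J c x - x :=
    ((strictConvexOn_affineProd hc hJ).subset Icc_subset_Ici_self (convex_Icc 0 1)).sub_concaveOn
      (concaveOn_id (convex_Icc 0 1))
  refine ⟨xstar, hxstar, ?_, affineProd_one J c,
    (affineProd_pos (fun j hj => Ioo_subset_Ico_self (hc j hj)) le_rfl).ne'⟩
  ext x
  simp only [mem_ofPred_eq, mem_insert_iff, mem_singleton_iff]
  constructor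
  · rintro ⟨hx, hxfix⟩
    exact hconv.eq_or_eq_of_apply_eq (Ioo_subset_Icc_self hxstar) (right_mem_Icc.2 zero_le_one) hx
      hxstar.2 (sub_eq_zero.2 hfix) (sub_eq_zero.2 (affineProd_one J c)) (sub_eq_zero.2 hxfix)
  · rintro (rfl | rfl)
    · exact ⟨Ioo_subset_Icc_self hxstar, hfix⟩
    · exact ⟨right_mem_Icc.2 zero_le_one, affineProd_one J c⟩

/-- For a nonempty finite index set `J` with `c j ∈ (0,1)` and `∑ c j > 1`, there is
`x* ∈ (0,1)` such that the fixed points of `f_c (x) = ∏ j ∈ J, ((1 - c j) + c j * x)`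
in `[0,1]` are exactly `{x*, 1}`; in particular `f_c 1 = 1` and `0` is not a fixed point. -/
theorem fixed_points_in_Icc_eq_pair {ι : Type*} (J : Finset ι) (hJ : J.Nonempty)
    (c : ι → ℝ) (hc : ∀ j ∈ J, c j ∈ Set.Ioo (0 : ℝ) 1)
    (hsum : 1 < ∑ j ∈ J, c j) :
    ∃ xstar ∈ Set.Ioo (0 : ℝ) 1,
      {x ∈ Set.Icc (0 : ℝ) 1 | (∏ j ∈ J, ((1 - c j) + c j * x)) = x} = {xstar, 1} ∧
      (∏ j ∈ J, ((1 - c j) + c j * (1 : ℝ))) = 1 ∧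
      (∏ j ∈ J, ((1 - c j) + c j * (0 : ℝ))) ≠ 0 :=
  fixed_points_in_Icc_eq_pair_general J c hc hsum
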